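/- For all y₀, y₁ ∈ {0,…,d−1}, the encoding |Ψ_{y₀y₁}⟩ = X^{y₀} Z^{y₁} |Ψ⟩ satisfies |⟨y₁|F† |Ψ_{y₀y₁}⟩|² = 1/2 + 1/(2√d). -/

import Mathlib

open Matrix Complex Finset

noncomputable section

def ω (d : ℕ) : ℂ := Complex.exp (2 * ↑Real.pi * Complex.I / (d : ℂ))

def Xp (d : ℕ) : Matrix (Fin d) (Fin d) ℂ :=
  Matrix.of fun j k => if (j : ℕ) = ((k : ℕ) + 1) % d then 1 else 0

def Zp (d : ℕ) : Matrix (Fin d) (Fin d) ℂ :=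
  Matrix.diagonal fun j => ω d ^ (j : ℕ)

def Fm (d : ℕ) : Matrix (Fin d) (Fin d) ℂ :=
  Matrix.of fun j k => ω d ^ ((j : ℕ) * (k : ℕ)) / ((Real.sqrt d : ℝ) : ℂ)

def ket (d : ℕ) (y : Fin d) : Fin d → ℂ := fun j => if j = y then 1 else 0

def e0 (d : ℕ) : Fin d → ℂ := fun j => if (j : ℕ) = 0 then 1 else 0

def Psi (d : ℕ) : Fin d → ℂ :=
  (((Real.sqrt (2 * (1 + 1 / Real.sqrt d)) : ℝ) : ℂ))⁻¹ •
    (e0 d + (Fm d).mulVec (e0 d))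

def dotc {d : ℕ} (v w : Fin d → ℂ) : ℂ := ∑ j, (starRingEnd ℂ) (v j) * w j

def outer {d : ℕ} (v : Fin d → ℂ) : Matrix (Fin d) (Fin d) ℂ :=
  Matrix.of fun i j => v i * (starRingEnd ℂ) (v j)

def enc (d : ℕ) (y₀ y₁ : Fin d) : Fin d → ℂ :=
  ((Xp d ^ (y₀ : ℕ)) * (Zp d ^ (y₁ : ℕ))).mulVec (Psi d)

/-!
Up to a phase, `⟨y₁|F†X^{y₀}` is `⟨y₁|F†` again, because `F|y₁⟩` is an eigenvector of `X`;
and `⟨y₁|F†Z^{y₁} = ⟨0|F†`, the uniform covector `(1/√d, …, 1/√d)`.  Hence the amplitude is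
`(1/√d) ∑ⱼ Ψⱼ = (1 + 1/√d) / √(2(1 + 1/√d))`, whose square is `(1 + 1/√d) / 2`.
-/

open Fin.NatCast

lemma norm_ω (d : ℕ) : ‖ω d‖ = 1 := by
  rw [ω, show 2 * ↑Real.pi * Complex.I / (d : ℂ) = ((2 * Real.pi / d : ℝ) : ℂ) * Complex.I by
    push_cast; ring]
  exact Complex.norm_exp_ofReal_mul_I _

lemma ω_pow_self (d : ℕ) : ω d ^ d = 1 := by
  rcases eq_or_ne d 0 with rfl | hd
  · exact pow_zero _
  rw [ω, ← Complex.exp_nat_mul, mul_div_cancel₀ _ (Nat.cast_ne_zero.mpr hd)]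
  exact Complex.exp_two_pi_mul_I

lemma ω_pow_mod_mul (d a b : ℕ) : ω d ^ (a % d * b) = ω d ^ (a * b) := by
  rw [pow_eq_pow_mod _ (ω_pow_self d), Nat.mod_mul_mod, ← pow_eq_pow_mod _ (ω_pow_self d)]

lemma conj_ω_pow_mul_self (d n : ℕ) : starRingEnd ℂ (ω d ^ n) * ω d ^ n = 1 := by
  rw [mul_comm, Complex.mul_conj, Complex.normSq_eq_norm_sq, norm_pow, norm_ω, one_pow]
  norm_num

lemma dotc_ket_left {d : ℕ} (y : Fin d) (v : Fin d → ℂ) : dotc (ket d y) v = v y := by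
  simp [dotc, ket, apply_ite]

lemma conjTranspose_mulVec_apply {d : ℕ} (M : Matrix (Fin d) (Fin d) ℂ) (v : Fin d → ℂ)
    (y : Fin d) : (Mᴴ *ᵥ v) y = dotc (M.col y) v := by
  simp [mulVec, dotProduct, dotc]

lemma ket_eq_single {d : ℕ} (y : Fin d) : ket d y = Pi.single y 1 := by
  ext j
  simp [ket, Pi.single_apply]

lemma Zp_pow_mulVec_apply {d : ℕ} (n : ℕ) (w : Fin d → ℂ) (j : Fin d) :
    (Zp d ^ n *ᵥ w) j = ω d ^ ((j : ℕ) * n) * w j := by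
  simp [Zp, diagonal_pow, mulVec_diagonal, pow_mul]

lemma dotc_Fm_col_Zp_pow_mulVec {d : ℕ} (y : Fin d) (w : Fin d → ℂ) :
    dotc ((Fm d).col y) (Zp d ^ (y : ℕ) *ᵥ w) = (∑ j, w j) / ((Real.sqrt d : ℝ) : ℂ) := by
  simp only [dotc, Zp_pow_mulVec_apply, Finset.sum_div]
  refine Finset.sum_congr rfl fun j _ => ?_
  rw [col_apply, Fm, of_apply, map_div₀, Complex.conj_ofReal]
  linear_combination (w j / ((Real.sqrt d : ℝ) : ℂ)) * conj_ω_pow_mul_self d ((j : ℕ) * y)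

section

variable {d : ℕ} [NeZero d]

lemma e0_eq_ket : e0 d = ket d 0 := by
  ext j
  simp [e0, ket, Fin.val_eq_zero_iff]

lemma Xp_mulVec_apply (w : Fin d → ℂ) (j : Fin d) : (Xp d *ᵥ w) j = w (j - 1) := by
  have hshift : ∀ k : Fin d, (j : ℕ) = ((k : ℕ) + 1) % d ↔ k = j - 1 := fun k => by
    rw [eq_sub_iff_add_eq, Fin.ext_iff, Fin.val_add, Fin.val_one', Nat.add_mod_mod, eq_comm]
  simp [Xp, mulVec, dotProduct, hshift]

lemma Xp_pow_mulVec_apply (n : ℕ) (w : Fin d → ℂ) (j : Fin d) :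
    (Xp d ^ n *ᵥ w) j = w (j - n) := by
  induction n generalizing j with
  | zero => simp
  | succ n ih =>
    rw [pow_succ', ← mulVec_mulVec, Xp_mulVec_apply, ih]
    congr 1
    push_cast
    abel

lemma dotc_Fm_col_Xp_pow_mulVec (n : ℕ) (y : Fin d) (w : Fin d → ℂ) :
    dotc ((Fm d).col y) (Xp d ^ n *ᵥ w)
      = starRingEnd ℂ (ω d ^ (n * (y : ℕ))) * dotc ((Fm d).col y) w := by
  simp only [dotc, Xp_pow_mulVec_apply, Finset.mul_sum]
  rw [← Equiv.sum_comp (Equiv.addRight (n : Fin d))]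
  refine Finset.sum_congr rfl fun i _ => ?_
  have hphase : ω d ^ (((i + n : Fin d) : ℕ) * y) = ω d ^ ((i : ℕ) * y) * ω d ^ (n * (y : ℕ)) := by
    rw [Fin.val_add, Fin.val_natCast, Nat.add_mod_mod, ω_pow_mod_mul, add_mul, pow_add]
  simp only [Equiv.coe_addRight, add_sub_cancel_right, col_apply, Fm, of_apply, map_div₀,
    hphase, map_mul]
  ring

lemma sum_Psi :
    ∑ j, Psi d j = (((1 + Real.sqrt d) / Real.sqrt (2 * (1 + 1 / Real.sqrt d)) : ℝ) : ℂ) := by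
  have hcol : ∀ j, (Fm d *ᵥ e0 d) j = 1 / ((Real.sqrt d : ℝ) : ℂ) := fun j => by
    simp [e0_eq_ket, ket_eq_single, Fm]
  simp only [Psi, Pi.smul_apply, Pi.add_apply, hcol, smul_eq_mul, ← Finset.mul_sum,
    Finset.sum_add_distrib, Finset.sum_const, card_univ, Fintype.card_fin, nsmul_eq_mul]
  have he0 : ∑ j, e0 d j = 1 := by simp [e0_eq_ket, ket_eq_single]
  have hsqrt : (d : ℂ) * (1 / ((Real.sqrt d : ℝ) : ℂ)) = ((Real.sqrt d : ℝ) : ℂ) := by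
    rw [mul_one_div, ← Complex.ofReal_natCast, ← Complex.ofReal_div, Real.div_sqrt]
  rw [he0, hsqrt]
  push_cast
  ring

end

lemma amplitude_sq (s : ℝ) (hs : 0 < s) :
    ((1 + s) / Real.sqrt (2 * (1 + 1 / s)) / s) ^ 2 = 1 / 2 + 1 / (2 * s) := by
  have hc : 0 < 2 * (1 + 1 / s) := by positivity
  rw [div_pow, div_pow, Real.sq_sqrt hc.le]
  field_simp
  ring

theorem stmt_3 (d : ℕ) (hd : Nat.Prime d) (y₀ y₁ : Fin d) :
    ‖dotc (ket d y₁) ((Fm d)ᴴ.mulVec (enc d y₀ y₁))‖ ^ 2 = 1 / 2 + 1 / (2 * Real.sqrt d) := by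
  have : NeZero d := ⟨hd.ne_zero⟩
  have hs : 0 < Real.sqrt d := Real.sqrt_pos.mpr (by exact_mod_cast hd.pos)
  have hamp : dotc (ket d y₁) ((Fm d)ᴴ *ᵥ enc d y₀ y₁)
      = starRingEnd ℂ (ω d ^ ((y₀ : ℕ) * y₁)) *
        (((1 + Real.sqrt d) / Real.sqrt (2 * (1 + 1 / Real.sqrt d)) / Real.sqrt d : ℝ) : ℂ) := by
    rw [dotc_ket_left, conjTranspose_mulVec_apply, enc, ← mulVec_mulVec,
      dotc_Fm_col_Xp_pow_mulVec, dotc_Fm_col_Zp_pow_mulVec, sum_Psi]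
    push_cast
    ring
  rw [hamp, norm_mul, RCLike.norm_conj, norm_pow, norm_ω, one_pow, one_mul, Complex.norm_real,
    Real.norm_eq_abs, sq_abs, amplitude_sq _ hs]
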